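/- Let P(r,s|a,b) be a nonsignaling box and define D(P) = sup over probability distributions ρ(a) on {1,…,A} of inf over ρ(r,𝐬|a)∈V(P) of the mutual information I(A;𝐒) of the channel ρ(𝐬|a)=Σ_r ρ(r,𝐬|a) with input ρ(a). Then D(P) = 0 if and only if P is local, i.e. P(r,s|a,b) = Σ_x P_A(r|a,x)P_B(s|b,x)P_S(x) for some finite set of x, conditional distributions P_A, P_B and distribution P_S. -/

import Mathlib

open scoped BigOperators

/-- A probability distribution on a finite type. -/
def IsDist {α : Type*} [Fintype α] (q : α → ℝ) : Prop :=
  (∀ x, 0 ≤ q x) ∧ ∑ x, q x = 1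

/-- Mutual information of the channel `W` with input distribution `q`
(convention `0 · log 0 = 0`, automatic since `Real.log 0 = 0`). -/
noncomputable def mutInfo {X Y : Type*} [Fintype X] [Fintype Y]
    (W : Y → X → ℝ) (q : X → ℝ) : ℝ :=
  ∑ y, ∑ x, W y x * q x * Real.log (W y x / ∑ x', W y x' * q x')

/-- A nonsignaling box `P(r,s|a,b)`. -/
def IsNSBox {R S : Type*} [Fintype R] [Fintype S] {A B : ℕ}
    (P : R → S → Fin A → Fin B → ℝ) : Prop :=
  (∀ r s a b, 0 ≤ P r s a b) ∧
  (∀ a b, ∑ r, ∑ s, P r s a b = 1) ∧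
  (∀ a r b b', ∑ s, P r s a b = ∑ s, P r s a b') ∧
  (∀ b s a a', ∑ r, P r s a b = ∑ r, P r s a' b)

/-- Membership in the set `V(P)`: `ρ(r,𝐬|a)` is a conditional probability over
`r` and sequences `𝐬 ∈ 𝓢^B` whose marginal on `(r, s_b)` is `P(r,s|a,b)`. -/
def MemV {R S : Type*} [Fintype R] [Fintype S] [DecidableEq S] {A B : ℕ}
    (P : R → S → Fin A → Fin B → ℝ)
    (ρ : R → (Fin B → S) → Fin A → ℝ) : Prop :=
  (∀ r ss a, 0 ≤ ρ r ss a) ∧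
  (∀ a, ∑ r, ∑ ss : Fin B → S, ρ r ss a = 1) ∧
  (∀ a b r s, ∑ ss : Fin B → S, (if ss b = s then ρ r ss a else 0) = P r s a b)


/-- `D(P) = sup_{ρ(a)} inf_{ρ(r,𝐬|a) ∈ V(P)} I(A;𝐒)`. -/
noncomputable def DP {R S : Type*} [Fintype R] [Fintype S] [DecidableEq S]
    {A B : ℕ} (P : R → S → Fin A → Fin B → ℝ) : ℝ :=
  sSup { d : ℝ | ∃ q : Fin A → ℝ, IsDist q ∧
    d = sInf { x : ℝ | ∃ ρ, MemV P ρ ∧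
          x = mutInfo (fun ss a => ∑ r, ρ r ss a) q } }

/-- A conditional probability `P(r,s|a,b)` is local if it is a mixture of
product distributions over a finite hidden variable. -/
def IsLocal {R S : Type*} [Fintype R] [Fintype S] {A B : ℕ}
    (P : R → S → Fin A → Fin B → ℝ) : Prop :=
  ∃ (n : ℕ) (PA : R → Fin A → Fin n → ℝ) (PB : S → Fin B → Fin n → ℝ)
      (PS : Fin n → ℝ),
    (∀ r a x, 0 ≤ PA r a x) ∧ (∀ a x, ∑ r, PA r a x = 1) ∧
    (∀ s b x, 0 ≤ PB s b x) ∧ (∀ b x, ∑ s, PB s b x = 1) ∧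
    IsDist PS ∧
    (∀ r s a b, P r s a b = ∑ x, PA r a x * PB s b x * PS x)

/-!
If `P` is local, Bob can answer all his questions at once, independently given the hidden
variable; this gives `ρ ∈ V(P)` whose channel `𝐬 | a` does not depend on `a`, so `I(A;𝐒) = 0`
for every input law.

Conversely, `I(A;𝐒)` dominates the squared Hellinger distance between the joint law of `(A, 𝐒)`
and the product of its marginals (from `log t ≤ t - 1` at `t = √(b/a)`). That distance is
continuous on the compact set `V(P)`, which is nonempty since `P` is nonsignaling, so if the
infimum of `I(A;𝐒)` vanishes for the uniform input, it vanishes at some `ρ ∈ V(P)`, whose channel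
is then independent of `a`. Taking `𝐬` as hidden variable, drawn from that channel, and Alice's
output from `ρ(r | 𝐬, a)` makes `P` local.
-/

open Finset

lemma sum_ite_prod_eq_of_sum_eq_one {ι S α : Type*} [Fintype ι] [DecidableEq ι] [Fintype S]
    [DecidableEq S] [CommSemiring α] (f : ι → S → α) (hf : ∀ i, ∑ s, f i s = 1)
    (i : ι) (s : S) :
    ∑ ss : ι → S, (if ss i = s then ∏ j, f j (ss j) else 0) = f i s := by
  set g : ι → S → α := fun j t => if j = i ∧ t ≠ s then 0 else f j t
  have hg : ∀ ss : ι → S, (if ss i = s then ∏ j, f j (ss j) else 0) = ∏ j, g j (ss j) := by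
    intro ss
    split_ifs with h
    · exact prod_congr rfl fun j _ => by grind
    · exact (prod_eq_zero (mem_univ i) (by simp [g, h])).symm
  have hgsum : ∀ j, ∑ t, g j t = if j = i then f i s else 1 := by
    intro j
    split_ifs with hj
    · subst hj; simp [g, ite_not]
    · simp [g, hj, hf]
  simp_rw [hg, ← Fintype.prod_sum, hgsum, Fintype.prod_ite_eq']

lemma isDist_uniform {α : Type*} [Fintype α] [Nonempty α] :
    IsDist fun _ : α => (Fintype.card α : ℝ)⁻¹ :=
  ⟨fun _ => by positivity, by simp⟩

lemma sub_add_sq_sqrt_sub_le_mul_log_div {a b : ℝ} (ha : 0 ≤ a) (hb : 0 ≤ b)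
    (hab : b = 0 → a = 0) :
    a - b + (√a - √b) ^ 2 ≤ a * Real.log (a / b) := by
  rcases ha.eq_or_lt with rfl | ha
  · simp [Real.sq_sqrt hb]
  have hb : 0 < b := hb.lt_of_ne fun h => ha.ne' (hab h.symm)
  have hlog : Real.log (√b / √a) ≤ √b / √a - 1 :=
    Real.log_le_sub_one_of_pos (by positivity)
  -- `a log (a/b) = -2a log (√b/√a) ≥ 2a (1 - √b/√a) = 2a - 2√a√b`
  have hlog' : a * Real.log (a / b) = -2 * a * Real.log (√b / √a) := by
    rw [← Real.sqrt_div' _ ha.le, Real.log_sqrt (by positivity), Real.log_div hb.ne' ha.ne',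
      Real.log_div ha.ne' hb.ne']
    ring
  have hsa : √a ^ 2 = a := Real.sq_sqrt ha.le
  have hsb : √b ^ 2 = b := Real.sq_sqrt hb.le
  have hsa' : 0 < √a := Real.sqrt_pos.mpr ha
  have hmul : a * (√b / √a) = √a * √b := by
    rw [mul_div_assoc', div_eq_iff hsa'.ne']; linear_combination (-√b) * hsa
  rw [hlog']
  nlinarith [mul_le_mul_of_nonneg_left hlog ha.le]

section MutualInformation

variable {X Y : Type*} [Fintype X] {W : Y → X → ℝ} {q : X → ℝ}

def outputDist (W : Y → X → ℝ) (q : X → ℝ) (y : Y) : ℝ :=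
  ∑ x, W y x * q x

lemma mul_le_outputDist (hW : ∀ y x, 0 ≤ W y x) (hq : ∀ x, 0 ≤ q x) (y : Y) (x : X) :
    W y x * q x ≤ outputDist W q y :=
  single_le_sum (f := fun x => W y x * q x) (fun x _ => mul_nonneg (hW y x) (hq x)) (mem_univ x)

lemma outputDist_nonneg (hW : ∀ y x, 0 ≤ W y x) (hq : ∀ x, 0 ≤ q x) (y : Y) :
    0 ≤ outputDist W q y :=
  sum_nonneg fun x _ => mul_nonneg (hW y x) (hq x)

variable [Fintype Y]

noncomputable def hellingerSq (W : Y → X → ℝ) (q : X → ℝ) : ℝ :=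
  ∑ y, ∑ x, (√(W y x * q x) - √(outputDist W q y * q x)) ^ 2

lemma mutInfo_eq_sum_outputDist (W : Y → X → ℝ) (q : X → ℝ) :
    mutInfo W q = ∑ y, ∑ x, W y x * q x * Real.log (W y x / outputDist W q y) :=
  rfl

lemma hellingerSq_nonneg : 0 ≤ hellingerSq W q := by
  unfold hellingerSq
  positivity

lemma continuous_hellingerSq (q : X → ℝ) : Continuous fun W : Y → X → ℝ => hellingerSq W q := by
  unfold hellingerSq outputDist
  fun_prop

lemma hellingerSq_le_mutInfo (hW : ∀ y x, 0 ≤ W y x) (hq : IsDist q) :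
    hellingerSq W q ≤ mutInfo W q := by
  set o := outputDist W q
  have hterm : ∀ y x, W y x * q x - o y * q x + (√(W y x * q x) - √(o y * q x)) ^ 2
      ≤ W y x * q x * Real.log (W y x / o y) := by
    intro y x
    rcases (hq.1 x).eq_or_lt with hqx | hqx
    · simp [← hqx]
    rw [← mul_div_mul_right _ _ hqx.ne']
    refine sub_add_sq_sqrt_sub_le_mul_log_div (mul_nonneg (hW y x) hqx.le)
      (mul_nonneg (outputDist_nonneg hW hq.1 y) hqx.le) fun h0 => ?_
    have hoy : o y = 0 := (mul_eq_zero.mp h0).resolve_right hqx.ne'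
    exact le_antisymm (hoy ▸ mul_le_outputDist hW hq.1 y x) (mul_nonneg (hW y x) hqx.le)
  have hcancel : ∀ y, ∑ x, (W y x * q x - o y * q x) = 0 := fun y => by
    rw [sum_sub_distrib, ← mul_sum, hq.2, mul_one, sub_eq_zero]
    rfl
  calc hellingerSq W q
      = ∑ y, ∑ x, (W y x * q x - o y * q x + (√(W y x * q x) - √(o y * q x)) ^ 2) := by
        simp only [sum_add_distrib, hcancel, zero_add]
        rfl
    _ ≤ mutInfo W q := sum_le_sum fun y _ => sum_le_sum fun x _ => hterm y x

lemma mutInfo_nonneg (hW : ∀ y x, 0 ≤ W y x) (hq : IsDist q) : 0 ≤ mutInfo W q :=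
  hellingerSq_nonneg.trans (hellingerSq_le_mutInfo hW hq)

lemma eq_outputDist_of_hellingerSq_eq_zero (hW : ∀ y x, 0 ≤ W y x) (hq : ∀ x, 0 ≤ q x)
    (h : hellingerSq W q = 0) (y : Y) {x : X} (hqx : 0 < q x) :
    W y x = outputDist W q y := by
  have hy := (sum_eq_zero_iff_of_nonneg fun y _ => sum_nonneg fun x _ => sq_nonneg _).mp h y
    (mem_univ y)
  have hyx := (sum_eq_zero_iff_of_nonneg fun x _ => sq_nonneg _).mp hy x (mem_univ x)
  rw [sq_eq_zero_iff, sub_eq_zero, Real.sqrt_inj (mul_nonneg (hW y x) (hq x))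
    (mul_nonneg (outputDist_nonneg hW hq y) (hq x))] at hyx
  exact mul_right_cancel₀ hqx.ne' hyx

lemma mutInfo_le_card (hW : ∀ y x, 0 ≤ W y x) (hW1 : ∀ x, ∑ y, W y x = 1) (hq : IsDist q) :
    mutInfo W q ≤ Fintype.card Y := by
  set o := outputDist W q
  have hterm : ∀ y x, W y x * q x * Real.log (W y x / o y) ≤ W y x * q x * -Real.log (o y) := by
    intro y x
    rcases (mul_nonneg (hW y x) (hq.1 x)).eq_or_lt with h | h
    · simp [← h]
    have hWx : 0 < W y x := pos_of_mul_pos_left h (hq.1 x)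
    have hWle : W y x ≤ 1 := hW1 x ▸ single_le_sum (fun y _ => hW y x) (mem_univ y)
    refine mul_le_mul_of_nonneg_left ?_ h.le
    rw [Real.log_div hWx.ne' (h.trans_le (mul_le_outputDist hW hq.1 y x)).ne']
    linarith [Real.log_nonpos hWx.le hWle]
  have hy : ∀ y, ∑ x, W y x * q x * Real.log (W y x / o y) ≤ 1 := fun y =>
    calc ∑ x, W y x * q x * Real.log (W y x / o y)
        ≤ ∑ x, W y x * q x * -Real.log (o y) := sum_le_sum fun x _ => hterm y x
      _ = Real.negMulLog (o y) := by rw [← sum_mul, Real.negMulLog, neg_mul_comm]; rfl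
      _ ≤ 1 - o y := Real.negMulLog_le_one_sub_self (outputDist_nonneg hW hq.1 y)
      _ ≤ 1 := by linarith [outputDist_nonneg hW hq.1 y]
  calc mutInfo W q ≤ ∑ _y : Y, (1 : ℝ) := sum_le_sum fun y _ => hy y
    _ = Fintype.card Y := by simp

lemma mutInfo_eq_zero_of_const (hc : ∀ y x x', W y x = W y x') (hq : ∑ x, q x = 1) :
    mutInfo W q = 0 := by
  rw [mutInfo_eq_sum_outputDist]
  refine sum_eq_zero fun y _ => sum_eq_zero fun x _ => ?_
  have ho : outputDist W q y = W y x := by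
    simp only [outputDist, hc y _ x, ← mul_sum, hq, mul_one]
  rw [ho]
  by_cases h : W y x = 0 <;> simp [h]

end MutualInformation

def marginalChannel {R Y X : Type*} [Fintype R] (ρ : R → Y → X → ℝ) : Y → X → ℝ :=
  fun y x => ∑ r, ρ r y x

section Box

variable {R S : Type*} [Fintype R] [Fintype S] {A B : ℕ} {P : R → S → Fin A → Fin B → ℝ}

lemma isLocal_of_model {X : Type*} [Fintype X] (PA : R → Fin A → X → ℝ)
    (PB : S → Fin B → X → ℝ) (PS : X → ℝ) (hPA0 : ∀ r a x, 0 ≤ PA r a x)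
    (hPA1 : ∀ a x, ∑ r, PA r a x = 1) (hPB0 : ∀ s b x, 0 ≤ PB s b x)
    (hPB1 : ∀ b x, ∑ s, PB s b x = 1) (hPS : IsDist PS)
    (hP : ∀ r s a b, P r s a b = ∑ x, PA r a x * PB s b x * PS x) : IsLocal P := by
  let e := (Fintype.equivFin X).symm
  refine ⟨Fintype.card X, fun r a i => PA r a (e i), fun s b i => PB s b (e i), fun i => PS (e i),
    fun r a i => hPA0 r a (e i), fun a i => hPA1 a (e i), fun s b i => hPB0 s b (e i),
    fun b i => hPB1 b (e i), ⟨fun i => hPS.1 (e i), ?_⟩, fun r s a b => ?_⟩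
  · rw [e.sum_comp PS, hPS.2]
  · rw [hP, e.sum_comp fun x => PA r a x * PB s b x * PS x]

lemma isLocal_of_eq_zero_or_eq_zero [Nonempty R] [Nonempty S] (h : A = 0 ∨ B = 0) : IsLocal P :=
  isLocal_of_model (X := Unit) (fun _ _ _ => (Fintype.card R : ℝ)⁻¹)
    (fun _ _ _ => (Fintype.card S : ℝ)⁻¹) (fun _ => (Fintype.card Unit : ℝ)⁻¹)
    (fun r _ _ => isDist_uniform.1 r) (fun _ _ => isDist_uniform.2)
    (fun s _ _ => isDist_uniform.1 s) (fun _ _ => isDist_uniform.2) isDist_uniform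
    fun _ _ a b => by rcases h with rfl | rfl <;> [exact a.elim0; exact b.elim0]

variable [DecidableEq S] {ρ : R → (Fin B → S) → Fin A → ℝ} {q : Fin A → ℝ}

def mutInfoSet (P : R → S → Fin A → Fin B → ℝ) (q : Fin A → ℝ) : Set ℝ :=
  {x | ∃ ρ, MemV P ρ ∧ x = mutInfo (marginalChannel ρ) q}

namespace MemV

lemma marginalChannel_nonneg (hρ : MemV P ρ) (ss : Fin B → S) (a : Fin A) :
    0 ≤ marginalChannel ρ ss a :=
  sum_nonneg fun r _ => hρ.1 r ss a

lemma sum_marginalChannel (hρ : MemV P ρ) (a : Fin A) :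
    ∑ ss, marginalChannel ρ ss a = 1 := by
  unfold marginalChannel
  rw [sum_comm]
  exact hρ.2.1 a

end MemV

lemma nonneg_of_mem_mutInfoSet (hq : IsDist q) {x : ℝ} (hx : x ∈ mutInfoSet P q) : 0 ≤ x := by
  obtain ⟨ρ, hρ, rfl⟩ := hx
  exact mutInfo_nonneg hρ.marginalChannel_nonneg hq

lemma sInf_mutInfoSet_nonneg (hq : IsDist q) : 0 ≤ sInf (mutInfoSet P q) :=
  Real.sInf_nonneg fun _ => nonneg_of_mem_mutInfoSet hq

lemma sInf_mutInfoSet_le_card (hq : IsDist q) :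
    sInf (mutInfoSet P q) ≤ Fintype.card (Fin B → S) := by
  rcases (mutInfoSet P q).eq_empty_or_nonempty with h | ⟨_, ρ, hρ, rfl⟩
  · rw [h, Real.sInf_empty]
    positivity
  exact (csInf_le ⟨0, fun _ => nonneg_of_mem_mutInfoSet hq⟩ ⟨ρ, hρ, rfl⟩).trans
    (mutInfo_le_card hρ.marginalChannel_nonneg hρ.sum_marginalChannel hq)

lemma DP_eq_zero_iff : DP P = 0 ↔ ∀ q, IsDist q → sInf (mutInfoSet P q) = 0 := by
  change sSup {d | ∃ q, IsDist q ∧ d = sInf (mutInfoSet P q)} = 0 ↔ _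
  constructor
  · intro h q hq
    refine le_antisymm ?_ (sInf_mutInfoSet_nonneg hq)
    refine h ▸ le_csSup ⟨Fintype.card (Fin B → S), ?_⟩ ⟨q, hq, rfl⟩
    rintro _ ⟨q', hq', rfl⟩
    exact sInf_mutInfoSet_le_card hq'
  · intro h
    refine le_antisymm (Real.sSup_nonpos ?_) (Real.sSup_nonneg ?_) <;>
      rintro _ ⟨q, hq, rfl⟩ <;> simp [h q hq]

lemma isCompact_setOf_memV (P : R → S → Fin A → Fin B → ℝ) : IsCompact {ρ | MemV P ρ} := by
  have hclosed : IsClosed {ρ | MemV P ρ} := by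
    simp only [MemV, Set.ofPred_and, Set.ofPred_forall, ← sum_filter]
    refine .inter ?_ (.inter ?_ ?_) <;>
      refine isClosed_iInter fun _ => ?_
    · exact isClosed_iInter fun _ => isClosed_iInter fun _ =>
        isClosed_le (by fun_prop) (by fun_prop)
    · exact isClosed_eq (by fun_prop) (by fun_prop)
    · exact isClosed_iInter fun _ => isClosed_iInter fun _ => isClosed_iInter fun _ =>
        isClosed_eq (by fun_prop) (by fun_prop)
  refine (isCompact_univ_pi fun _ => isCompact_univ_pi fun _ => isCompact_univ_pi fun _ =>
    isCompact_Icc (a := (0 : ℝ)) (b := 1)).of_isClosed_subset hclosed fun ρ hρ => ?_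
  simp only [Set.mem_pi, Set.mem_univ, Set.mem_Icc, forall_const]
  intro r ss a
  refine ⟨hρ.1 r ss a, hρ.2.1 a ▸ ?_⟩
  calc ρ r ss a ≤ ∑ ss', ρ r ss' a := single_le_sum (fun ss' _ => hρ.1 r ss' a) (mem_univ ss)
    _ ≤ ∑ r', ∑ ss', ρ r' ss' a :=
      single_le_sum (f := fun r' => ∑ ss', ρ r' ss' a)
        (fun r' _ => sum_nonneg fun ss' _ => hρ.1 r' ss' a) (mem_univ r)

lemma IsNSBox.exists_memV (hP : IsNSBox P) (b₀ : Fin B) : ∃ ρ, MemV P ρ := by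
  obtain ⟨hP0, hP1, hPB, -⟩ := hP
  set m : R → Fin A → ℝ := fun r a => ∑ s, P r s a b₀
  have hm : ∀ r a b, ∑ s, P r s a b = m r a := fun r a b => hPB a r b b₀
  have hm0 : ∀ r a, 0 ≤ m r a := fun r a => sum_nonneg fun s _ => hP0 r s a b₀
  have hle : ∀ r s a b, P r s a b ≤ m r a := fun r s a b =>
    hm r a b ▸ single_le_sum (fun s _ => hP0 r s a b) (mem_univ s)
  have hdist : ∀ r a, m r a ≠ 0 → ∀ b, ∑ s, P r s a b / m r a = 1 := fun r a hma b => by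
    rw [← sum_div, hm, div_self hma]
  -- Alice's marginal `m` times independent copies of Bob's conditional law, one for each `b`;
  -- where `m r a = 0` the factor `m r a` kills the junk quotients `P / 0 = 0`
  refine ⟨fun r ss a => m r a * ∏ b, P r (ss b) a b / m r a, fun r ss a => ?_, fun a => ?_,
    fun a b r s => ?_⟩
  · exact mul_nonneg (hm0 r a) (prod_nonneg fun b _ => div_nonneg (hP0 r _ a b) (hm0 r a))
  · have hrow : ∀ r, ∑ ss : Fin B → S, m r a * ∏ b, P r (ss b) a b / m r a = m r a := by
      intro r
      by_cases hma : m r a = 0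
      · simp [hma]
      rw [← mul_sum, ← Fintype.prod_sum (fun b t => P r t a b / m r a),
        prod_eq_one fun b _ => hdist r a hma b, mul_one]
    simp_rw [hrow]
    exact hP1 a b₀
  · by_cases hma : m r a = 0
    · simpa [hma] using (le_antisymm (hma ▸ hle r s a b) (hP0 r s a b)).symm
    simp_rw [← mul_ite_zero, ← mul_sum,
      sum_ite_prod_eq_of_sum_eq_one (fun b t => P r t a b / m r a) (hdist r a hma) b s,
      mul_div_cancel₀ _ hma]

lemma exists_memV_marginalChannel_const_of_sInf_eq_zero (hV : ∃ ρ, MemV P ρ) (hq : IsDist q)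
    (hqpos : ∀ a, 0 < q a) (h : sInf (mutInfoSet P q) = 0) :
    ∃ ρ, MemV P ρ ∧ ∀ ss a a', marginalChannel ρ ss a = marginalChannel ρ ss a' := by
  have hcont : Continuous fun ρ : R → (Fin B → S) → Fin A → ℝ =>
      hellingerSq (marginalChannel ρ) q :=
    (continuous_hellingerSq q).comp (by unfold marginalChannel; fun_prop)
  obtain ⟨ρ, hρ, hmin⟩ := (isCompact_setOf_memV P).exists_isMinOn hV hcont.continuousOn
  have hle : hellingerSq (marginalChannel ρ) q ≤ sInf (mutInfoSet P q) := by
    obtain ⟨ρ₀, hρ₀⟩ := hV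
    refine le_csInf ⟨_, ρ₀, hρ₀, rfl⟩ ?_
    rintro _ ⟨ρ', hρ', rfl⟩
    exact (isMinOn_iff.mp hmin ρ' hρ').trans
      (hellingerSq_le_mutInfo hρ'.marginalChannel_nonneg hq)
  have h0 : hellingerSq (marginalChannel ρ) q = 0 := le_antisymm (h ▸ hle) hellingerSq_nonneg
  refine ⟨ρ, hρ, fun ss a a' => ?_⟩
  rw [eq_outputDist_of_hellingerSq_eq_zero hρ.marginalChannel_nonneg hq.1 h0 ss (hqpos a),
    eq_outputDist_of_hellingerSq_eq_zero hρ.marginalChannel_nonneg hq.1 h0 ss (hqpos a')]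

lemma isLocal_of_memV_marginalChannel_const [Nonempty R] (hρ : MemV P ρ)
    (hc : ∀ ss a a', marginalChannel ρ ss a = marginalChannel ρ ss a') (a₀ : Fin A) :
    IsLocal P := by
  set c := fun ss => marginalChannel ρ ss a₀
  have hc' : ∀ ss a, marginalChannel ρ ss a = c ss := fun ss a => hc ss a a₀
  have hρc : ∀ r ss a, ρ r ss a ≤ c ss := fun r ss a =>
    hc' ss a ▸ single_le_sum (fun r _ => hρ.1 r ss a) (mem_univ r)
  refine isLocal_of_model (X := Fin B → S)
    (fun r a ss => if c ss = 0 then (Fintype.card R : ℝ)⁻¹ else ρ r ss a / c ss)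
    (fun s b ss => if ss b = s then 1 else 0) c (fun r a ss => ?_) (fun a ss => ?_)
    (fun s b ss => by positivity) (fun b ss => by simp)
    ⟨fun ss => hρ.marginalChannel_nonneg ss a₀, hρ.sum_marginalChannel a₀⟩ fun r s a b => ?_
  · split_ifs
    exacts [isDist_uniform.1 r, div_nonneg (hρ.1 r ss a) (hρ.marginalChannel_nonneg ss a₀)]
  · split_ifs with h0
    · exact isDist_uniform.2
    · rw [← sum_div, div_eq_one_iff_eq h0]
      exact hc' ss a
  · rw [← hρ.2.2 a b r s]
    refine sum_congr rfl fun ss _ => ?_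
    by_cases h0 : c ss = 0
    · simp [h0, le_antisymm (h0 ▸ hρc r ss a) (hρ.1 r ss a)]
    · split_ifs <;> simp [h0]

lemma IsLocal.exists_memV_marginalChannel_const (hL : IsLocal P) :
    ∃ ρ, MemV P ρ ∧ ∀ ss a a', marginalChannel ρ ss a = marginalChannel ρ ss a' := by
  obtain ⟨n, PA, PB, PS, hPA0, hPA1, hPB0, hPB1, hPS, hP⟩ := hL
  have hchan : ∀ (ss : Fin B → S) a, ∑ r, ∑ x, PA r a x * (∏ b, PB (ss b) b x) * PS x
      = ∑ x, (∏ b, PB (ss b) b x) * PS x := fun ss a => by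
    rw [sum_comm]
    simp_rw [mul_assoc, ← sum_mul, hPA1, one_mul]
  have hprod : ∀ x, ∑ ss : Fin B → S, ∏ b, PB (ss b) b x = 1 := fun x => by
    rw [← Fintype.prod_sum fun b t => PB t b x, prod_eq_one fun b _ => hPB1 b x]
  refine ⟨fun r (ss : Fin B → S) a => ∑ x, PA r a x * (∏ b, PB (ss b) b x) * PS x,
    ⟨fun r ss a => ?_, fun a => ?_, fun a b r s => ?_⟩, fun ss a a' => ?_⟩
  · exact sum_nonneg fun x _ => mul_nonneg (mul_nonneg (hPA0 r a x)
      (prod_nonneg fun b _ => hPB0 _ b x)) (hPS.1 x)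
  · rw [sum_comm]
    simp_rw [hchan]
    rw [sum_comm]
    simp_rw [← sum_mul, hprod, one_mul]
    exact hPS.2
  · have hite : ∀ ss : Fin B → S,
        (if ss b = s then ∑ x, PA r a x * (∏ b', PB (ss b') b' x) * PS x else 0)
          = ∑ x, PA r a x * (if ss b = s then ∏ b', PB (ss b') b' x else 0) * PS x := by
      intro ss
      split_ifs <;> simp
    rw [sum_congr rfl fun ss _ => hite ss, sum_comm, hP]
    refine sum_congr rfl fun x _ => ?_
    rw [← sum_mul, ← mul_sum,
      sum_ite_prod_eq_of_sum_eq_one (fun b t => PB t b x) (fun b => hPB1 b x)]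
  · simp only [marginalChannel, hchan]

lemma sInf_mutInfoSet_eq_zero (hρ : MemV P ρ)
    (hc : ∀ ss a a', marginalChannel ρ ss a = marginalChannel ρ ss a') (hq : IsDist q) :
    sInf (mutInfoSet P q) = 0 :=
  IsLeast.csInf_eq ⟨⟨ρ, hρ, (mutInfo_eq_zero_of_const hc hq.2).symm⟩,
    fun _ => nonneg_of_mem_mutInfoSet hq⟩

end Box

/-- A nonsignaling box has vanishing nonlocal capacity, `D(P) = 0`, if and only
if it is local. -/
theorem stmt17 {R S : Type*} [Fintype R] [Fintype S] [DecidableEq S]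
    [Nonempty R] [Nonempty S] {A B : ℕ}
    (P : R → S → Fin A → Fin B → ℝ) (hP : IsNSBox P) :
    DP P = 0 ↔ IsLocal P := by
  rw [DP_eq_zero_iff]
  constructor
  · intro h
    rcases Nat.eq_zero_or_pos A with hA | hA
    · exact isLocal_of_eq_zero_or_eq_zero (.inl hA)
    rcases Nat.eq_zero_or_pos B with hB | hB
    · exact isLocal_of_eq_zero_or_eq_zero (.inr hB)
    have : Nonempty (Fin A) := ⟨⟨0, hA⟩⟩
    obtain ⟨ρ, hρ, hc⟩ := exists_memV_marginalChannel_const_of_sInf_eq_zero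
      (hP.exists_memV ⟨0, hB⟩) isDist_uniform (fun _ => by positivity) (h _ isDist_uniform)
    exact isLocal_of_memV_marginalChannel_const hρ hc ⟨0, hA⟩
  · intro hL q hq
    obtain ⟨ρ, hρ, hc⟩ := hL.exists_memV_marginalChannel_const
    exact sInf_mutInfoSet_eq_zero hρ hc hq
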